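/- arXiv:math/0004108 — 2 statements merged into one kernel-verified Lean document; each statement's English description precedes it below -/
import Mathlib

section
/- For every μ > 0, 0 < f(μ) < g(μ)/3; that is, the pressure of the noninteracting neutron gas is strictly positive and strictly smaller than one third of its energy density. -/
/-- Dimensionless pressure of a noninteracting neutron gas. -/
noncomputable def f (μ : ℝ) : ℝ :=
  (1/8) * ((2*μ - 3) * Real.sqrt (μ + μ^2) + 3 * Real.log (Real.sqrt μ + Real.sqrt (1 + μ)))

/-- Dimensionless energy density of a noninteracting neutron gas. -/
noncomputable def g (μ : ℝ) : ℝ :=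
  (1/8) * ((6*μ + 3) * Real.sqrt (μ + μ^2) - 3 * Real.log (Real.sqrt μ + Real.sqrt (1 + μ)))

lemma f_hasDerivAt {μ : ℝ} (hμ : 0 < μ) :
    HasDerivAt f (μ^2 / (2 * Real.sqrt (μ + μ^2))) μ := by
  have h1μ : (0:ℝ) < 1 + μ := by linarith
  have ha : 0 < Real.sqrt μ := Real.sqrt_pos.2 hμ
  have hb : 0 < Real.sqrt (1+μ) := Real.sqrt_pos.2 h1μ
  have hq : 0 < μ + μ^2 := by nlinarith
  have hs : 0 < Real.sqrt (μ + μ^2) := Real.sqrt_pos.2 hq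
  have ha2 : Real.sqrt μ ^ 2 = μ := Real.sq_sqrt hμ.le
  have hb2 : Real.sqrt (1+μ) ^ 2 = 1 + μ := Real.sq_sqrt h1μ.le
  have hab : Real.sqrt (μ+μ^2) = Real.sqrt μ * Real.sqrt (1+μ) := by
    rw [← Real.sqrt_mul hμ.le]; ring_nf
  have h1 : HasDerivAt (fun x : ℝ => x + x^2) (1 + 2*μ) μ := by
    simpa [Pi.add_def] using (hasDerivAt_id μ).add (hasDerivAt_pow 2 μ)
  have h2 : HasDerivAt (fun x : ℝ => Real.sqrt (x + x^2))
      (1 / (2 * Real.sqrt (μ+μ^2)) * (1+2*μ)) μ :=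
    (Real.hasDerivAt_sqrt hq.ne').comp μ h1
  have h3 : HasDerivAt (fun x : ℝ => Real.sqrt x) (1 / (2 * Real.sqrt μ)) μ :=
    Real.hasDerivAt_sqrt hμ.ne'
  have h4 : HasDerivAt (fun x : ℝ => Real.sqrt (1 + x))
      (1 / (2 * Real.sqrt (1+μ)) * 1) μ :=
    (Real.hasDerivAt_sqrt h1μ.ne').comp μ (by
      simpa [Pi.add_def] using (hasDerivAt_const μ (1:ℝ)).add (hasDerivAt_id μ))
  have hne : Real.sqrt μ + Real.sqrt (1+μ) ≠ 0 := by positivity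
  have h6 : HasDerivAt (fun x : ℝ => Real.log (Real.sqrt x + Real.sqrt (1+x)))
      ((1 / (2 * Real.sqrt μ) + 1 / (2 * Real.sqrt (1+μ)) * 1) /
        (Real.sqrt μ + Real.sqrt (1+μ))) μ :=
    (h3.add h4).log hne
  have hlin : HasDerivAt (fun x : ℝ => 2*x - 3) 2 μ := by
    simpa [Pi.sub_def] using ((hasDerivAt_id μ).const_mul (2:ℝ)).sub (hasDerivAt_const μ (3:ℝ))
  have hfull := ((hlin.mul h2).add (h6.const_mul 3)).const_mul (1/8 : ℝ)
  have heq : (1/8 : ℝ) * (2 * Real.sqrt (μ+μ^2) +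
      (2*μ - 3) * (1 / (2 * Real.sqrt (μ+μ^2)) * (1+2*μ)) +
      3 * ((1 / (2 * Real.sqrt μ) + 1 / (2 * Real.sqrt (1+μ)) * 1) /
        (Real.sqrt μ + Real.sqrt (1+μ)))) = μ^2 / (2 * Real.sqrt (μ + μ^2)) := by
    have hX2 : Real.sqrt (μ+μ^2) * Real.sqrt (μ+μ^2) = μ + μ^2 :=
      Real.mul_self_sqrt hq.le
    have hlog : (1 / (2 * Real.sqrt μ) + 1 / (2 * Real.sqrt (1+μ)) * 1) /
        (Real.sqrt μ + Real.sqrt (1+μ)) = 1 / (2 * Real.sqrt (μ+μ^2)) := by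
      rw [hab]
      field_simp
      ring
    rw [hlog]
    generalize Real.sqrt (μ+μ^2) = S at hX2 hs ⊢
    field_simp
    linear_combination 4 * hX2
  rw [← heq]
  exact hfull

/-- For every μ > 0, 0 < f(μ) < g(μ)/3: the pressure is strictly positive and strictly
    smaller than one third of the energy density. -/
theorem f_pos_and_lt_third_g (μ : ℝ) (hμ : 0 < μ) :
    0 < f μ ∧ f μ < g μ / 3 := by
  have h1μ : (0:ℝ) < 1 + μ := by linarith
  have ha : 0 < Real.sqrt μ := Real.sqrt_pos.2 hμ
  have hb : 0 < Real.sqrt (1+μ) := Real.sqrt_pos.2 h1μ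
  have hq : 0 < μ + μ^2 := by nlinarith
  have hs : 0 < Real.sqrt (μ + μ^2) := Real.sqrt_pos.2 hq
  constructor
  · have hf0 : f 0 = 0 := by simp [f]
    have hmono : StrictMonoOn f (Set.Ici (0:ℝ)) := by
      apply strictMonoOn_of_deriv_pos (convex_Ici 0)
      · apply ContinuousOn.mul continuousOn_const
        apply ContinuousOn.add
        · exact ((continuous_const.mul continuous_id').sub continuous_const).continuousOn.mul
            ((Real.continuous_sqrt.comp (continuous_id'.add (continuous_pow 2))).continuousOn)
        · apply ContinuousOn.mul continuousOn_const
          apply ContinuousOn.log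
          · exact (Real.continuous_sqrt.continuousOn.add
              ((Real.continuous_sqrt.comp (continuous_const.add continuous_id')).continuousOn))
          · intro x hx
            simp only [Set.mem_Ici] at hx
            have h1 : (0:ℝ) < Real.sqrt (1+x) := Real.sqrt_pos.2 (by linarith)
            have h2 : (0:ℝ) ≤ Real.sqrt x := Real.sqrt_nonneg x
            positivity
      · intro x hx
        rw [interior_Ici] at hx
        have hx : 0 < x := hx
        rw [(f_hasDerivAt hx).deriv]
        have : 0 < Real.sqrt (x + x^2) := Real.sqrt_pos.2 (by nlinarith)
        positivity
    have := hmono Set.self_mem_Ici (Set.mem_Ici.2 hμ.le) hμ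
    rwa [hf0] at this
  · -- key : log (√μ + √(1+μ)) < √(μ+μ²)
    have hkey : Real.log (Real.sqrt μ + Real.sqrt (1 + μ)) < Real.sqrt (μ + μ^2) := by
      have harsinh : Real.log (Real.sqrt μ + Real.sqrt (1 + μ)) = Real.arsinh (Real.sqrt μ) := by
        rw [Real.arsinh, Real.sq_sqrt hμ.le]
      have h1 : Real.arsinh (Real.sqrt μ) < Real.sqrt μ := by
        have := Real.self_lt_sinh_iff.2 ha
        calc Real.arsinh (Real.sqrt μ) < Real.arsinh (Real.sinh (Real.sqrt μ)) :=
              Real.arsinh_lt_arsinh.2 this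
          _ = Real.sqrt μ := Real.arsinh_sinh _
      have hab : Real.sqrt (μ+μ^2) = Real.sqrt μ * Real.sqrt (1+μ) := by
        rw [← Real.sqrt_mul hμ.le]; ring_nf
      have hb1 : 1 < Real.sqrt (1+μ) := by
        rw [Real.lt_sqrt (by norm_num)]
        nlinarith
      have h2 : Real.sqrt μ < Real.sqrt μ * Real.sqrt (1+μ) := by
        nlinarith
      rw [harsinh, hab]; linarith
    have hdiff : g μ / 3 - f μ = (1/2) * (Real.sqrt (μ+μ^2) -
        Real.log (Real.sqrt μ + Real.sqrt (1 + μ))) := by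
      simp only [f, g]; ring
    linarith
end

section
/- For every μ > 0, the ratio of derivatives f′(μ)/g′(μ) equals μ/(3(1+μ)); this function of μ is strictly increasing on (0,∞) and is strictly less than 1/3 for every μ > 0 (so the squared sound speed dp̃/dε̃ of the noninteracting neutron gas never exceeds one third). -/
open Real

lemma hasDerivAt_sqrt_add_sq {x : ℝ} (hx : x + x ^ 2 ≠ 0) :
    HasDerivAt (fun y : ℝ => √(y + y ^ 2)) ((1 + 2 * x) / (2 * √(x + x ^ 2))) x := by
  have hpoly : HasDerivAt (fun y : ℝ => y + y ^ 2) (1 + 2 * x) x :=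
    ((hasDerivAt_id' x).add (hasDerivAt_pow 2 x)).congr_deriv (by norm_num)
  exact hpoly.sqrt hx

lemma sqrt_mul_sqrt_one_add {x : ℝ} (hx : 0 ≤ x) : √x * √(1 + x) = √(x + x ^ 2) := by
  rw [← sqrt_mul hx]
  ring_nf

lemma hasDerivAt_log_sqrt_add_sqrt_one_add {x : ℝ} (hx : 0 < x) :
    HasDerivAt (fun y : ℝ => log (√y + √(1 + y))) (1 / (2 * √(x + x ^ 2))) x := by
  have hx1 : 0 < 1 + x := by linarith
  have hsqrt_one_add : HasDerivAt (fun y : ℝ => √(1 + y)) (1 / (2 * √(1 + x))) x := by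
    simpa using ((hasDerivAt_id x).const_add 1).sqrt hx1.ne'
  have hsum : HasDerivAt (fun y : ℝ => √y + √(1 + y)) (1 / (2 * √x) + 1 / (2 * √(1 + x))) x :=
    (hasDerivAt_sqrt hx.ne').add hsqrt_one_add
  have hpos : 0 < √x + √(1 + x) := by positivity
  convert hsum.log hpos.ne' using 1
  have hsqrt_pos := sqrt_pos.2 hx
  have hsqrt_one_add_pos := sqrt_pos.2 hx1
  rw [← sqrt_mul_sqrt_one_add hx.le]
  field_simp
  ring

lemma hasDerivAt_affine_mul_sqrt_add_log (a b c : ℝ) {x : ℝ} (hx : 0 < x) :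
    HasDerivAt (fun y : ℝ => (a * y + b) * √(y + y ^ 2) + c * log (√y + √(1 + y)))
      ((4 * a * x ^ 2 + (3 * a + 2 * b) * x + (b + c)) / (2 * √(x + x ^ 2))) x := by
  have hq : 0 < x + x ^ 2 := by positivity
  have haffine : HasDerivAt (fun y : ℝ => a * y + b) a x := by
    simpa using ((hasDerivAt_id x).const_mul a).add_const b
  have h : HasDerivAt (fun y : ℝ => (a * y + b) * √(y + y ^ 2) + c * log (√y + √(1 + y)))
      (a * √(x + x ^ 2) + (a * x + b) * ((1 + 2 * x) / (2 * √(x + x ^ 2)))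
        + c * (1 / (2 * √(x + x ^ 2)))) x :=
    (haffine.mul (hasDerivAt_sqrt_add_sq hq.ne')).add
      ((hasDerivAt_log_sqrt_add_sqrt_one_add hx).const_mul c)
  convert h using 1
  have hs := sqrt_pos.2 hq
  have hsq := sq_sqrt hq.le
  generalize √(x + x ^ 2) = s at hs hsq ⊢
  field_simp
  linear_combination (-2 * a) * hsq

lemma hasDerivAt_f {μ : ℝ} (hμ : 0 < μ) : HasDerivAt f (μ ^ 2 / (2 * √(μ + μ ^ 2))) μ :=
  ((hasDerivAt_affine_mul_sqrt_add_log 2 (-3) 3 hμ).const_mul (1 / 8)).congr_deriv (by ring)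

lemma hasDerivAt_g {μ : ℝ} (hμ : 0 < μ) :
    HasDerivAt g (3 * (μ + μ ^ 2) / (2 * √(μ + μ ^ 2))) μ := by
  have hg : g = fun y => 1 / 8 * ((6 * y + 3) * √(y + y ^ 2) + -3 * log (√y + √(1 + y))) :=
    funext fun y => by rw [g]; ring
  rw [hg]
  refine ((hasDerivAt_affine_mul_sqrt_add_log 6 3 (-3) hμ).const_mul (1 / 8)).congr_deriv ?_
  ring

lemma deriv_f_div_deriv_g {μ : ℝ} (hμ : 0 < μ) : deriv f μ / deriv g μ = μ / (3 * (1 + μ)) := by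
  have hs : √(μ + μ ^ 2) ≠ 0 := (sqrt_pos.2 (by positivity)).ne'
  rw [(hasDerivAt_f hμ).deriv, (hasDerivAt_g hμ).deriv, div_div_div_cancel_right₀ (by positivity)]
  field_simp

lemma strictMonoOn_div_three_mul_one_add :
    StrictMonoOn (fun μ : ℝ => μ / (3 * (1 + μ))) (Set.Ioi (-1)) := by
  intro a (ha : -1 < a) b (hb : -1 < b) hab
  have ha' : 0 < 1 + a := by linarith
  have hb' : 0 < 1 + b := by linarith
  rw [div_lt_div_iff₀ (by positivity) (by positivity)]
  nlinarith

lemma div_three_mul_one_add_lt_third {μ : ℝ} (hμ : -1 < μ) : μ / (3 * (1 + μ)) < 1 / 3 := by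
  rw [div_lt_div_iff₀ (by linarith) (by norm_num)]
  linarith

/-- For every μ > 0, f′(μ)/g′(μ) = μ/(3(1+μ)); this function is strictly increasing on
    (0,∞) and strictly less than 1/3 for every μ > 0 (the squared sound speed of the
    noninteracting neutron gas never exceeds one third). -/
theorem sound_speed :
    (∀ μ : ℝ, 0 < μ → deriv f μ / deriv g μ = μ / (3 * (1 + μ))) ∧
    StrictMonoOn (fun μ : ℝ => μ / (3 * (1 + μ))) (Set.Ioi 0) ∧
    (∀ μ : ℝ, 0 < μ → μ / (3 * (1 + μ)) < 1/3) := by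
  have hIoi : Set.Ioi (0 : ℝ) ⊆ Set.Ioi (-1) := Set.Ioi_subset_Ioi (by norm_num)
  exact ⟨fun μ hμ => deriv_f_div_deriv_g hμ, strictMonoOn_div_three_mul_one_add.mono hIoi,
    fun μ hμ => div_three_mul_one_add_lt_third (by linarith)⟩
end
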